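/- Let Q : E → B be a continuous map between topological spaces and Φ : E → E a homeomorphism with Q ∘ Φ = Q. Suppose every point ξ ∈ B has a connected open neighborhood V and a connected open set U ⊆ E such that Q restricted to U is a homeomorphism onto V, and such that for all η ∈ V and q ∈ U with Q(q) = η, one has Q⁻¹(η) = { Φⁿ(q) : n ∈ ℤ }. Assume moreover Φⁿ(q) = q implies n = 0 for every q ∈ E (Φ acts freely, including all iterates). Then Q is a covering map, the sets Φⁿ(U) for n ∈ ℤ are pairwise disjoint, and Q⁻¹(V) = ⋃ₙ Φⁿ(U) with each Φⁿ(U) mapped homeomorphically onto V by Q. -/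

import Mathlib

/-!
Since `Q ∘ Φ = Q`, every translate `Φⁿ(U)` is mapped by `Q` homeomorphically onto `V`, just
like `U`. These sheets cover `Q⁻¹(V)` because the fibres over `V` are `Φ`-orbits, and they are
pairwise disjoint because `Q` is injective on `U` and `Φ` acts freely. An open set `V` over
which the preimage splits into disjoint open sheets, each mapped homeomorphically onto `V`, is
evenly covered.
-/

open Set Function

namespace Equiv.Perm

variable {α β : Type*} {f : α → β} {σ : Perm α} {U : Set α} {V : Set β}

theorem comp_zpow_of_comp_eq (hσ : f ∘ σ = f) (n : ℤ) : f ∘ ⇑(σ ^ n) = f := by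
  have hσinv : f ∘ ⇑σ⁻¹ = f := by
    conv_lhs => rw [← hσ, comp_assoc, ← coe_mul, mul_inv_cancel, coe_one, comp_id]
  induction n using Int.induction_on with
  | zero => rfl
  | succ k ih => rw [zpow_add_one, coe_mul, ← comp_assoc, ih, hσ]
  | pred k ih => rw [zpow_sub_one, coe_mul, ← comp_assoc, ih, hσinv]

theorem bijOn_image_zpow (hσ : f ∘ σ = f) (hU : BijOn f U V) (n : ℤ) :
    BijOn f ((σ ^ n) '' U) V := by
  rw [← bijOn_comp_iff (σ ^ n).injective.injOn, comp_zpow_of_comp_eq hσ]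
  exact hU

theorem disjoint_image_zpow (hσ : f ∘ σ = f) (hU : InjOn f U)
    (hfree : ∀ (x : α) (n : ℤ), (σ ^ n) x = x → n = 0) {m n : ℤ} (hmn : m ≠ n) :
    _root_.Disjoint ((σ ^ m) '' U) ((σ ^ n) '' U) := by
  rw [disjoint_left]
  rintro _ ⟨a, ha, rfl⟩ ⟨b, hb, hba⟩
  have hab : b = a := hU hb ha <| by
    rw [← congrFun (comp_zpow_of_comp_eq hσ n) b, ← congrFun (comp_zpow_of_comp_eq hσ m) a]
    exact congrArg f hba
  subst hab
  have hfix : (σ ^ (m - n)) ((σ ^ n) b) = (σ ^ n) b := by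
    rw [← mul_apply, ← zpow_add, sub_add_cancel, hba]
  exact hmn (sub_eq_zero.mp (hfree _ _ hfix))

theorem preimage_eq_iUnion_image_zpow (hσ : f ∘ σ = f) (hmaps : MapsTo f U V)
    (hsurj : SurjOn f U V) (horbit : ∀ q ∈ U, ∀ x, f x = f q → ∃ n : ℤ, (σ ^ n) q = x) :
    f ⁻¹' V = ⋃ n : ℤ, (σ ^ n) '' U := by
  ext x
  simp only [mem_preimage, mem_iUnion]
  constructor
  · intro hx
    obtain ⟨q, hq, hqx⟩ := hsurj hx
    obtain ⟨n, rfl⟩ := horbit q hq x hqx.symm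
    exact ⟨n, q, hq, rfl⟩
  · rintro ⟨n, q, hq, rfl⟩
    rw [← comp_apply (f := f), comp_zpow_of_comp_eq hσ]
    exact hmaps hq

end Equiv.Perm

namespace Homeomorph

variable {X Y : Type*} [TopologicalSpace X] [TopologicalSpace Y]

theorem coe_toEquiv_zpow (Φ : X ≃ₜ X) (n : ℤ) : ⇑(Φ.toEquiv ^ n) = ⇑(Φ ^ n) :=
  congrArg DFunLike.coe <| map_zpow (MonoidHom.mk' (toEquiv : (X ≃ₜ X) → Equiv.Perm X)
    fun _ _ => rfl) Φ n |>.symm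

theorem isOpen_image_of_subset_image_zpow {Q : X → Y} {Φ : X ≃ₜ X} (hΦ : Q ∘ Φ = Q) {U : Set X}
    (hU : ∀ W ⊆ U, IsOpen W → IsOpen (Q '' W)) (n : ℤ) :
    ∀ W ⊆ (Φ.toEquiv ^ n) '' U, IsOpen W → IsOpen (Q '' W) := by
  intro W hWU hW
  have hpre : (Φ.toEquiv ^ n) ⁻¹' W ⊆ U :=
    (preimage_mono hWU).trans (Equiv.preimage_image _ U).le
  have hQW : Q '' W = Q '' ((Φ.toEquiv ^ n) ⁻¹' W) := by
    conv_lhs => rw [← image_preimage_eq W (Φ.toEquiv ^ n).surjective, ← image_comp,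
      Equiv.Perm.comp_zpow_of_comp_eq hΦ n]
  rw [hQW]
  refine hU _ hpre ?_
  rw [coe_toEquiv_zpow]
  exact hW.preimage (Φ ^ n).continuous

end Homeomorph

theorem IsEvenlyCovered.of_bijOn_sheets {E X ι : Type*} [TopologicalSpace E]
    [TopologicalSpace X] [TopologicalSpace ι] [DiscreteTopology ι] [Nonempty ι] {f : E → X}
    {S : ι → Set E} {V : Set X} {x : X} (hx : x ∈ V) (hV : IsOpen V)
    (hS : ∀ i, IsOpen (S i)) (hcont : ∀ i, ContinuousOn f (S i)) (hbij : ∀ i, BijOn f (S i) V)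
    (hopen : ∀ i, ∀ W ⊆ S i, IsOpen W → IsOpen (f '' W)) (hdisj : Pairwise (Disjoint on S))
    (hcover : f ⁻¹' V ⊆ ⋃ i, S i) : IsEvenlyCovered f x ι := by
  obtain ⟨e, -⟩ := (hbij (Classical.arbitrary ι)).surjOn hx
  have : Nonempty (X → E) := ⟨fun _ => e⟩
  have open_iff : ∀ i {W}, W ⊆ V → (IsOpen W ↔ IsOpen (f ⁻¹' W ∩ S i)) := by
    intro i W hWV
    refine ⟨fun hW => inter_comm .. ▸ (hcont i).isOpen_inter_preimage (hS i) hW, fun hW => ?_⟩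
    have hfW : f '' (f ⁻¹' W ∩ S i) = W := by
      rw [image_preimage_inter, (hbij i).image_eq, inter_eq_left.mpr hWV]
    exact hfW ▸ hopen i _ inter_subset_right hW
  exact .of_trivialization (t := hV.trivializationDiscrete S V open_iff (fun i => (hbij i).injOn)
    (fun i => (hbij i).surjOn) hdisj hcover) hx

theorem birkhoff_lift_is_covering_general
    {E B : Type*} [TopologicalSpace E] [TopologicalSpace B]
    (Q : E → B) (hQ : Continuous Q)
    (Φ : E ≃ₜ E) (hcomm : Q ∘ Φ = Q)
    (V : B → Set B) (U : B → Set E)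
    (hVopen : ∀ ξ, IsOpen (V ξ))
    (hVmem : ∀ ξ, ξ ∈ V ξ)
    (hUopen : ∀ ξ, IsOpen (U ξ))
    (hbij : ∀ ξ, Set.BijOn Q (U ξ) (V ξ))
    (hopenmap : ∀ ξ, ∀ W ⊆ U ξ, IsOpen W → IsOpen (Q '' W))
    (hfiber : ∀ ξ, ∀ η ∈ V ξ, ∀ q ∈ U ξ, Q q = η →
      Q ⁻¹' {η} = {x : E | ∃ n : ℤ, (Φ.toEquiv ^ n) q = x})
    (hfree : ∀ (q : E) (n : ℤ), (Φ.toEquiv ^ n) q = q → n = 0) :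
    IsCoveringMap Q ∧
      (∀ ξ, ∀ m n : ℤ, m ≠ n →
        Disjoint ((Φ.toEquiv ^ m) '' U ξ) ((Φ.toEquiv ^ n) '' U ξ)) ∧
      (∀ ξ, Q ⁻¹' V ξ = ⋃ n : ℤ, (Φ.toEquiv ^ n) '' U ξ) ∧
      (∀ ξ, ∀ n : ℤ, Set.BijOn Q ((Φ.toEquiv ^ n) '' U ξ) (V ξ)) := by
  have hdisj ξ m n (hmn : m ≠ n) :=
    Equiv.Perm.disjoint_image_zpow hcomm (hbij ξ).injOn hfree hmn
  have hunion ξ : Q ⁻¹' V ξ = ⋃ n : ℤ, (Φ.toEquiv ^ n) '' U ξ :=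
    Equiv.Perm.preimage_eq_iUnion_image_zpow hcomm (hbij ξ).mapsTo (hbij ξ).surjOn
      fun q hq x hx => (hfiber ξ _ ((hbij ξ).mapsTo hq) q hq rfl).subset hx
  have hsheet ξ (n : ℤ) := Equiv.Perm.bijOn_image_zpow hcomm (hbij ξ) n
  have hsheet_open ξ (n : ℤ) : IsOpen ((Φ.toEquiv ^ n) '' U ξ) := by
    rw [Homeomorph.coe_toEquiv_zpow]
    exact (Φ ^ n).isOpenMap _ (hUopen ξ)
  have hevenly ξ : IsEvenlyCovered Q ξ ℤ :=
    .of_bijOn_sheets (hVmem ξ) (hVopen ξ) (hsheet_open ξ) (fun _ => hQ.continuousOn)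
      (hsheet ξ) (Homeomorph.isOpen_image_of_subset_image_zpow hcomm (hopenmap ξ))
      (fun _ _ => hdisj ξ _ _) (hunion ξ).subset
  exact ⟨fun ξ => (hevenly ξ).to_isEvenlyCovered_preimage, hdisj, hunion, hsheet⟩

/-- Abstract covering criterion for the lift of a Birkhoff section: if `Q ∘ Φ = Q`, each
point of `B` has a connected open neighborhood `V ξ` over which `Q` restricts to a
homeomorphism from a connected open set `U ξ` onto `V ξ`, fibers over `V ξ` are exactly
`Φ`-orbits, and every nontrivial power of `Φ` is fixed-point free, then `Q` is a covering
map, the sets `Φⁿ(U ξ)` are pairwise disjoint, `Q⁻¹(V ξ) = ⋃ₙ Φⁿ(U ξ)`, and `Q` maps each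
`Φⁿ(U ξ)` bijectively onto `V ξ`. -/
theorem birkhoff_lift_is_covering
    {E B : Type*} [TopologicalSpace E] [TopologicalSpace B]
    (Q : E → B) (hQ : Continuous Q)
    (Φ : E ≃ₜ E) (hcomm : Q ∘ Φ = Q)
    (V : B → Set B) (U : B → Set E)
    (hVopen : ∀ ξ, IsOpen (V ξ)) (hVconn : ∀ ξ, IsConnected (V ξ))
    (hVmem : ∀ ξ, ξ ∈ V ξ)
    (hUopen : ∀ ξ, IsOpen (U ξ)) (hUconn : ∀ ξ, IsConnected (U ξ))
    (hbij : ∀ ξ, Set.BijOn Q (U ξ) (V ξ))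
    (hopenmap : ∀ ξ, ∀ W ⊆ U ξ, IsOpen W → IsOpen (Q '' W))
    (hfiber : ∀ ξ, ∀ η ∈ V ξ, ∀ q ∈ U ξ, Q q = η →
      Q ⁻¹' {η} = {x : E | ∃ n : ℤ, (Φ.toEquiv ^ n) q = x})
    (hfree : ∀ (q : E) (n : ℤ), (Φ.toEquiv ^ n) q = q → n = 0) :
    IsCoveringMap Q ∧
      (∀ ξ, ∀ m n : ℤ, m ≠ n →
        Disjoint ((Φ.toEquiv ^ m) '' U ξ) ((Φ.toEquiv ^ n) '' U ξ)) ∧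
      (∀ ξ, Q ⁻¹' V ξ = ⋃ n : ℤ, (Φ.toEquiv ^ n) '' U ξ) ∧
      (∀ ξ, ∀ n : ℤ, Set.BijOn Q ((Φ.toEquiv ^ n) '' U ξ) (V ξ)) :=
  birkhoff_lift_is_covering_general Q hQ Φ hcomm V U hVopen hVmem hUopen hbij hopenmap hfiber hfree
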